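/- Let V be a real vector space of finite dimension m, let E ≤ V be a subspace of codimension k, and let θ₁, …, θ_k be a basis of the annihilator Ann(E) ≤ V*. Then the null space of the spinor φ = θ₁ ∧ ⋯ ∧ θ_k under Clifford multiplication is exactly E ⊕ Ann(E) = L(E,0); in particular this null space is maximal isotropic, i.e. φ is a pure spinor. -/

import Mathlib

set_option synthInstance.maxHeartbeats 1000000
set_option maxHeartbeats 1000000

open Module

/-- The canonical symmetric bilinear form on `V ⊕ V*`,
`⟨X+ξ, Y+η⟩ = (1/2)(ξ(Y) + η(X))`. -/
noncomputable def canForm (V : Type*) [AddCommGroup V] [Module ℝ V] :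
    LinearMap.BilinForm ℝ (V × Module.Dual ℝ V) :=
  LinearMap.mk₂ ℝ (fun p q => (p.2 q.1 + q.2 p.1) / 2)
    (fun p p' q => by simp; ring)
    (fun c p q => by simp; ring)
    (fun p q q' => by simp; ring)
    (fun c p q => by simp; ring)

/-- The maximal isotropic subspace `L(E,ε) = {X + ξ ∈ E ⊕ V* : ξ|_E = ε(X)}`
determined by a subspace `E ≤ V` and a bilinear form `ε` on `E`. -/
noncomputable def LEeps {V : Type*} [AddCommGroup V] [Module ℝ V]
    (E : Submodule ℝ V) (ε : E →ₗ[ℝ] E →ₗ[ℝ] ℝ) :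
    Submodule ℝ (V × Module.Dual ℝ V) where
  carrier := {p | ∃ h : p.1 ∈ E, ∀ y : E, p.2 y.1 = ε ⟨p.1, h⟩ y}
  add_mem' := by
    rintro p q ⟨hp, hp2⟩ ⟨hq, hq2⟩
    refine ⟨add_mem hp hq, fun y => ?_⟩
    have h1 : (⟨(p + q).1, add_mem hp hq⟩ : E) = ⟨p.1, hp⟩ + ⟨q.1, hq⟩ := rfl
    rw [h1, map_add]
    simp [hp2 y, hq2 y]
  zero_mem' := ⟨zero_mem E, fun y => by
    have h1 : (⟨(0 : V × Module.Dual ℝ V).1, zero_mem E⟩ : E) = 0 := rfl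
    rw [h1, map_zero]
    simp⟩
  smul_mem' := by
    rintro c p ⟨hp, hp2⟩
    refine ⟨Submodule.smul_mem E c hp, fun y => ?_⟩
    have h1 : (⟨(c • p).1, Submodule.smul_mem E c hp⟩ : E) = c • (⟨p.1, hp⟩ : E) := rfl
    rw [h1, map_smul]
    simp [hp2 y]

set_option synthInstance.maxHeartbeats 1000000 in
/-- The Clifford action `(X+ξ)·φ = i_X φ + ξ ∧ φ` of `V ⊕ V*` on `∧•V*`. -/
noncomputable def cliffAct {V : Type*} [AddCommGroup V] [Module ℝ V]
    (v : V × Module.Dual ℝ V) :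
    ExteriorAlgebra ℝ (Module.Dual ℝ V) →ₗ[ℝ] ExteriorAlgebra ℝ (Module.Dual ℝ V) :=
  CliffordAlgebra.contractLeft (Q := (0 : QuadraticForm ℝ (Module.Dual ℝ V)))
      (Module.Dual.eval ℝ V v.1) +
    LinearMap.mulLeft ℝ (ExteriorAlgebra.ι ℝ v.2)

open ExteriorAlgebra

namespace PureSpinorAux

variable {M : Type*} [AddCommGroup M] [Module ℝ M]

/-- wedge product of a list of vectors. -/
noncomputable def wp (l : List M) : ExteriorAlgebra ℝ M := (l.map (ι ℝ)).prod

@[simp] lemma wp_nil : wp ([] : List M) = 1 := rfl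
@[simp] lemma wp_cons (a : M) (l : List M) : wp (a :: l) = ι ℝ a * wp l := by
  simp [wp]

/-- left contraction -/
noncomputable def ct (f : Module.Dual ℝ M) :
    ExteriorAlgebra ℝ M →ₗ[ℝ] ExteriorAlgebra ℝ M :=
  CliffordAlgebra.contractLeft (Q := (0 : QuadraticForm ℝ M)) f

lemma ct_ι_mul (f : Module.Dual ℝ M) (a : M) (x : ExteriorAlgebra ℝ M) :
    ct f (ι ℝ a * x) = f a • x - ι ℝ a * ct f x :=
  CliffordAlgebra.contractLeft_ι_mul f a x

@[simp] lemma ct_one (f : Module.Dual ℝ M) : ct f (1 : ExteriorAlgebra ℝ M) = 0 :=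
  CliffordAlgebra.contractLeft_one _ _

lemma ct_comm (f g : Module.Dual ℝ M) (x : ExteriorAlgebra ℝ M) :
    ct f (ct g x) = - ct g (ct f x) :=
  CliffordAlgebra.contractLeft_comm f g x

lemma expow_succ (n : ℕ) :
    ⋀[ℝ]^(n+1) M = LinearMap.range (ι ℝ : M →ₗ[ℝ] ExteriorAlgebra ℝ M) * ⋀[ℝ]^n M :=
  pow_succ' _ _

lemma expow_one :
    ⋀[ℝ]^1 M = LinearMap.range (ι ℝ : M →ₗ[ℝ] ExteriorAlgebra ℝ M) :=
  pow_one _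

lemma mem_expow_zero_of_algebraMap (r : ℝ) :
    algebraMap ℝ (ExteriorAlgebra ℝ M) r ∈ ⋀[ℝ]^0 M := by
  have : (⋀[ℝ]^0 M) = (1 : Submodule ℝ (ExteriorAlgebra ℝ M)) := pow_zero _
  rw [this]
  exact Submodule.algebraMap_mem r

lemma wp_mem (l : List M) : wp l ∈ ⋀[ℝ]^(l.length) M := by
  induction l with
  | nil =>
      have h := mem_expow_zero_of_algebraMap (M := M) 1
      rw [map_one] at h
      simpa using h
  | cons a t ih =>
      rw [wp_cons, List.length_cons, expow_succ]
      exact Submodule.mul_mem_mul (LinearMap.mem_range_self _ a) ih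

lemma ct_mem (f : Module.Dual ℝ M) :
    ∀ (n : ℕ) (x : ExteriorAlgebra ℝ M), x ∈ ⋀[ℝ]^(n+1) M → ct f x ∈ ⋀[ℝ]^n M := by
  intro n
  induction n with
  | zero =>
      intro x hx
      rw [zero_add, expow_one] at hx
      obtain ⟨m, rfl⟩ := hx
      have h1 : ct f (ι ℝ m) = algebraMap ℝ _ (f m) := CliffordAlgebra.contractLeft_ι 0 f m
      rw [h1]
      exact mem_expow_zero_of_algebraMap _
  | succ m ih =>
      intro x hx
      rw [expow_succ] at hx
      refine Submodule.mul_induction_on hx ?_ ?_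
      · rintro a ⟨v, rfl⟩ y hy
        rw [ct_ι_mul]
        refine sub_mem (Submodule.smul_mem _ _ hy) ?_
        rw [expow_succ]
        exact Submodule.mul_mem_mul (LinearMap.mem_range_self _ v) (ih y hy)
      · intro x y hx hy
        rw [map_add]; exact add_mem hx hy

/-- contraction kills a wedge if the functional kills every factor -/
lemma ct_wp_eq_zero {f : Module.Dual ℝ M} {l : List M} (h : ∀ x ∈ l, f x = 0) :
    ct f (wp l) = 0 := by
  induction l with
  | nil => simp
  | cons a t ih =>
      rw [wp_cons, ct_ι_mul, h a List.mem_cons_self,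
        ih (fun x hx => h x (List.mem_cons_of_mem _ hx)), mul_zero, zero_smul, sub_zero]

/-- independence invariant for a list -/
def goodL : List M → Prop
  | [] => True
  | a :: t => a ∉ Submodule.span ℝ {x : M | x ∈ t} ∧ goodL t

lemma goodL_cons {a : M} {t : List M} (h1 : a ∉ Submodule.span ℝ {x : M | x ∈ t})
    (h2 : goodL t) : goodL (a :: t) := ⟨h1, h2⟩

/-- a functional separating the head from the tail -/
lemma exists_dual {a : M} {S : Set M} (ha : a ∉ Submodule.span ℝ S) :
    ∃ δ : Module.Dual ℝ M, δ a = 1 ∧ ∀ x ∈ S, δ x = 0 := by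
  obtain ⟨f, hfa, hf⟩ := Submodule.exists_dual_map_eq_bot_of_notMem ha inferInstance
  refine ⟨(f a)⁻¹ • f, by simp [inv_mul_cancel₀ hfa], fun x hx => ?_⟩
  have h1 : f x ∈ (Submodule.span ℝ S).map f := ⟨x, Submodule.subset_span hx, rfl⟩
  rw [hf, Submodule.mem_bot] at h1
  simp [h1]

lemma wp_ne_zero : ∀ {l : List M}, goodL l → wp l ≠ 0 := by
  intro l
  induction l with
  | nil => simp
  | cons a t ih =>
      rintro ⟨ha, ht⟩ h0
      obtain ⟨δ, hδa, hδt⟩ := exists_dual ha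
      have h1 := congrArg (ct δ) h0
      rw [wp_cons, ct_ι_mul, hδa, one_smul, ct_wp_eq_zero (fun x hx => hδt x hx),
        mul_zero, sub_zero, map_zero] at h1
      exact ih ht h1

/-- reverse lemma for the contraction part -/
lemma ct_wp_rev {f : Module.Dual ℝ M} :
    ∀ {l : List M}, goodL l → ct f (wp l) = 0 → ∀ x ∈ l, f x = 0 := by
  intro l
  induction l with
  | nil => intro _ _ x hx; exact absurd hx List.not_mem_nil
  | cons a t ih =>
      rintro ⟨ha, ht⟩ h0 x hx
      rw [wp_cons, ct_ι_mul] at h0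
      have hEq : f a • wp t = ι ℝ a * ct f (wp t) := sub_eq_zero.mp h0
      have hfa : f a = 0 := by
        have h1 := congrArg (fun z => ι ℝ a * z) hEq
        simp only [← mul_assoc] at h1
        rw [ι_sq_zero, zero_mul] at h1
        rw [mul_smul_comm] at h1
        by_contra hne
        refine wp_ne_zero (l := a :: t) ⟨ha, ht⟩ ?_
        have h2 := congrArg (fun z => (f a)⁻¹ • z) h1
        simpa [wp_cons, smul_smul, inv_mul_cancel₀ hne] using h2
      rcases List.mem_cons.mp hx with rfl | hxt
      · exact hfa
      · obtain ⟨δ, hδa, hδt⟩ := exists_dual ha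
        have hQ : ι ℝ a * ct f (wp t) = 0 := by
          rw [← hEq, hfa, zero_smul]
        have h3 := congrArg (ct δ) hQ
        rw [ct_ι_mul, hδa, one_smul, map_zero] at h3
        have h4 : ct δ (ct f (wp t)) = 0 := by
          rw [ct_comm, ct_wp_eq_zero (fun x hx => hδt x hx), map_zero, neg_zero]
        rw [h4, mul_zero, sub_zero] at h3
        exact ih ht h3 x hxt

lemma goodL_ofFn {n : ℕ} {θ : Fin n → M} (hli : LinearIndependent ℝ θ) :
    goodL (List.ofFn θ) := by
  induction n with
  | zero => simp [goodL]
  | succ m ih =>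
      rw [List.ofFn_succ]
      refine goodL_cons ?_ (ih (hli.comp Fin.succ (Fin.succ_injective m)))
      have hset : {x : M | x ∈ List.ofFn fun i : Fin m => θ i.succ}
          = θ '' (Set.range (Fin.succ : Fin m → Fin (m+1))) := by
        ext x
        simp only [List.mem_ofFn, Set.mem_setOf_eq, Set.mem_image, Set.mem_range]
        constructor
        · rintro ⟨y, rfl⟩; exact ⟨y.succ, ⟨y, rfl⟩, rfl⟩
        · rintro ⟨z, ⟨y, rfl⟩, rfl⟩; exact ⟨y, rfl⟩
      rw [hset]
      have h0 : (0 : Fin (m+1)) ∉ Set.range (Fin.succ : Fin m → Fin (m+1)) := by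
        simp [Fin.succ_ne_zero, eq_comm]
      exact hli.notMem_span_image h0

noncomputable def prodSubEquiv {N P : Type*} [AddCommGroup N] [Module ℝ N]
    [AddCommGroup P] [Module ℝ P] (p : Submodule ℝ N) (q : Submodule ℝ P) :
    (p.prod q) ≃ₗ[ℝ] p × q where
  toFun x := (⟨x.1.1, x.2.1⟩, ⟨x.1.2, x.2.2⟩)
  map_add' _ _ := rfl
  map_smul' _ _ := rfl
  invFun x := ⟨(x.1.1, x.2.1), x.1.2, x.2.2⟩
  left_inv _ := rfl
  right_inv _ := rfl

/-- grading separation -/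
lemma grade_sep {i j : ℕ} (hij : i ≠ j) {a b : ExteriorAlgebra ℝ M}
    (ha : a ∈ ⋀[ℝ]^i M) (hb : b ∈ ⋀[ℝ]^j M) (h : a + b = 0) : a = 0 ∧ b = 0 := by
  have hint : DirectSum.IsInternal (fun n : ℕ => ⋀[ℝ]^n M) :=
    DirectSum.Decomposition.isInternal _
  have hdis : Disjoint (⋀[ℝ]^i M) (⋀[ℝ]^j M) :=
    hint.submodule_iSupIndep.pairwiseDisjoint hij
  have hb' : a ∈ ⋀[ℝ]^j M := by
    have : a = -b := by linear_combination (norm := abel) h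
    rw [this]; exact neg_mem hb
  have ha0 : a = 0 := by
    have := hdis.le_bot ⟨ha, hb'⟩
    simpa using this
  refine ⟨ha0, ?_⟩
  rw [ha0, zero_add] at h
  exact h

end PureSpinorAux

open PureSpinorAux

/-- If `θ₁, …, θ_k` is a basis of `Ann(E)` for a subspace `E ≤ V` of codimension
`k`, then the null space of the spinor `φ = θ₁ ∧ ⋯ ∧ θ_k` is exactly
`E ⊕ Ann(E) = L(E,0)`; in particular it is maximal isotropic, i.e. `φ` is pure. -/
theorem nullSpace_of_wedge_of_annihilator_basis
    (V : Type*) [AddCommGroup V] [Module ℝ V] [FiniteDimensional ℝ V]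
    (E : Submodule ℝ V) (k : ℕ)
    (hcodim : Module.finrank ℝ E + k = Module.finrank ℝ V)
    (θ : Fin k → Module.Dual ℝ V)
    (hli : LinearIndependent ℝ θ)
    (hspan : Submodule.span ℝ (Set.range θ) = E.dualAnnihilator) :
    {v : V × Module.Dual ℝ V |
        cliffAct v ((List.ofFn fun i => ExteriorAlgebra.ι ℝ (θ i)).prod) = 0} =
      (LEeps E (0 : E →ₗ[ℝ] E →ₗ[ℝ] ℝ) : Set (V × Module.Dual ℝ V)) ∧
    LEeps E (0 : E →ₗ[ℝ] E →ₗ[ℝ] ℝ) = E.prod E.dualAnnihilator ∧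
    (∀ p ∈ LEeps E (0 : E →ₗ[ℝ] E →ₗ[ℝ] ℝ), ∀ q ∈ LEeps E (0 : E →ₗ[ℝ] E →ₗ[ℝ] ℝ),
      canForm V p q = 0) ∧
    Module.finrank ℝ (LEeps E (0 : E →ₗ[ℝ] E →ₗ[ℝ] ℝ)) = Module.finrank ℝ V := by
  classical
  set φ : ExteriorAlgebra ℝ (Module.Dual ℝ V) :=
    (List.ofFn fun i => ExteriorAlgebra.ι ℝ (θ i)).prod with hφ
  have hφwp : φ = wp (List.ofFn θ) := by
    rw [hφ, wp, List.map_ofFn]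
    rfl
  have hgood : goodL (List.ofFn θ) := goodL_ofFn hli
  have hrange : {x : Module.Dual ℝ V | x ∈ List.ofFn θ} = Set.range θ := by
    ext x; simp [List.mem_ofFn]
  have hφmem : φ ∈ ⋀[ℝ]^k (Module.Dual ℝ V) := by
    have := wp_mem (List.ofFn θ)
    rwa [List.length_ofFn, ← hφwp] at this
  have hmem_iff : ∀ p : V × Module.Dual ℝ V,
      p ∈ LEeps E (0 : E →ₗ[ℝ] E →ₗ[ℝ] ℝ) ↔ p.1 ∈ E ∧ ∀ y ∈ E, p.2 y = 0 := by
    intro p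
    constructor
    · rintro ⟨h1, h2⟩
      exact ⟨h1, fun y hy => by simpa using h2 ⟨y, hy⟩⟩
    · rintro ⟨h1, h2⟩
      exact ⟨h1, fun y => by simpa using h2 y.1 y.2⟩
  have F2' : ∀ g ∈ Submodule.span ℝ (Set.range θ), ExteriorAlgebra.ι ℝ g * φ = 0 := by
    intro g hg
    induction hg using Submodule.span_induction with
    | mem x hx =>
        obtain ⟨i, rfl⟩ := hx
        exact ExteriorAlgebra.ι_mul_prod_list θ i
    | zero => simp
    | add x y _ _ hx hy => rw [map_add, add_mul, hx, hy, add_zero]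
    | smul c x _ hx => rw [map_smul, smul_mul_assoc, hx, smul_zero]
  -- the main set equality
  refine ⟨?_, ?_, ?_, ?_⟩
  · ext p
    obtain ⟨X, ξ⟩ := p
    rw [Set.mem_setOf_eq, SetLike.mem_coe]
    constructor
    · intro h
      have h' : ct (Module.Dual.eval ℝ V X) φ + ExteriorAlgebra.ι ℝ ξ * φ = 0 := h
      have hsplit : ct (Module.Dual.eval ℝ V X) φ = 0 ∧ ExteriorAlgebra.ι ℝ ξ * φ = 0 := by
        cases k with
        | zero =>
            have hφ1 : φ = 1 := by
              rw [hφwp]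
              have : List.ofFn θ = [] := by simp
              rw [this, wp_nil]
            constructor
            · rw [hφ1, ct_one]
            · rw [hφ1, ct_one, zero_add] at h'
              rw [hφ1]; exact h'
        | succ m =>
            refine grade_sep (i := m) (j := m + 2) (by omega) ?_ ?_ h'
            · exact ct_mem _ m φ hφmem
            · rw [expow_succ]
              exact Submodule.mul_mem_mul (LinearMap.mem_range_self _ ξ) hφmem
      have hξ : ξ ∈ E.dualAnnihilator := by
        rw [← hspan]
        by_contra hnot
        have hg : goodL (ξ :: List.ofFn θ) :=
          goodL_cons (by rwa [hrange]) hgood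
        refine wp_ne_zero hg ?_
        rw [wp_cons, ← hφwp]
        exact hsplit.2
      have hXθ : ∀ i, θ i X = 0 := by
        intro i
        have := ct_wp_rev hgood (by rw [← hφwp]; exact hsplit.1) (θ i)
          (by simp [List.mem_ofFn])
        simpa using this
      have hXE : X ∈ E := by
        have hX' : X ∈ E.dualAnnihilator.dualCoannihilator := by
          rw [Submodule.mem_dualCoannihilator]
          intro g hg
          rw [← hspan] at hg
          induction hg using Submodule.span_induction with
          | mem x hx => obtain ⟨i, rfl⟩ := hx; exact hXθ i
          | zero => simp
          | add x y _ _ hx hy => simp [hx, hy]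
          | smul c x _ hx => simp [hx]
        rwa [Subspace.dualAnnihilator_dualCoannihilator_eq] at hX'
      exact (hmem_iff (X, ξ)).mpr
        ⟨hXE, fun y hy => (Submodule.mem_dualAnnihilator ξ).mp hξ y hy⟩
    · intro hp
      obtain ⟨hXE, hξ0⟩ := (hmem_iff (X, ξ)).mp hp
      have hξann : ξ ∈ Submodule.span ℝ (Set.range θ) := by
        rw [hspan]
        exact (Submodule.mem_dualAnnihilator ξ).mpr hξ0
      have hctzero : ct (Module.Dual.eval ℝ V X) φ = 0 := by
        rw [hφwp]
        refine ct_wp_eq_zero ?_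
        intro x hx
        rw [List.mem_ofFn] at hx
        obtain ⟨i, rfl⟩ := hx
        have hθi : θ i ∈ E.dualAnnihilator := by
          rw [← hspan]; exact Submodule.subset_span ⟨i, rfl⟩
        simpa using (Submodule.mem_dualAnnihilator (θ i)).mp hθi X hXE
      show cliffAct (X, ξ) φ = 0
      have : ct (Module.Dual.eval ℝ V X) φ + ExteriorAlgebra.ι ℝ ξ * φ = 0 := by
        rw [hctzero, F2' ξ hξann, add_zero]
      exact this
  · ext p
    rw [hmem_iff, Submodule.mem_prod, Submodule.mem_dualAnnihilator]
  · intro p hp q hq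
    obtain ⟨hp1, hp2⟩ := (hmem_iff p).mp hp
    obtain ⟨hq1, hq2⟩ := (hmem_iff q).mp hq
    show canForm V p q = 0
    simp [canForm, hp2 q.1 hq1, hq2 p.1 hp1]
  · have hL : LEeps E (0 : E →ₗ[ℝ] E →ₗ[ℝ] ℝ) = E.prod E.dualAnnihilator := by
      ext p
      rw [hmem_iff, Submodule.mem_prod, Submodule.mem_dualAnnihilator]
    rw [hL]
    have hfr : Module.finrank ℝ (E.prod E.dualAnnihilator)
        = Module.finrank ℝ (E × E.dualAnnihilator) :=
      LinearEquiv.finrank_eq (prodSubEquiv E E.dualAnnihilator)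
    haveI := Module.Free.of_divisionRing (K := ℝ) (V := ↥E.dualAnnihilator)
    rw [hfr, Module.finrank_prod]
    have hann : Module.finrank ℝ E.dualAnnihilator = k := by
      rw [← hspan]
      simpa using finrank_span_eq_card hli
    rw [hann, hcodim]
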